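/- There exists a constant C > 0 such that for every integer t ≥ 1, Σ_{z∈ℤ} Δ(z,t)² ≤ C·t^{−3/2}. -/

import Mathlib

/-!
Expanding the square and shifting the summation variable,
`Σ_z Δ(z,t)² = 2 Σ_x p(x,t)² - 2 Σ_x p(x,t) p(x+2,t)`. By Vandermonde's identity these two
correlations are `4^{-t} C(2t,t)` and `4^{-t} C(2t,t+1)`, whose difference is `4^{-t}` times the
Catalan number `c_t = C(2t,t)/(t+1)`. The ratio `C(2n+2,n+1)/C(2n,n) = 2(2n+1)/(n+1)` gives
`(n+1) C(2n,n)² ≤ 16ⁿ` by induction, hence `c_t ≤ 4^t (t+1)^{-3/2}`.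
-/

noncomputable section

namespace KPZpaper

/-- Transition probability of the simple symmetric random walk on ℤ:
`p(x,t) = 2^{-t} C(t,(t+x)/2)` if `|x| ≤ t` and `x + t` is even, `0` otherwise. -/
def rwP (x : ℤ) (t : ℕ) : ℝ :=
  if |x| ≤ (t : ℤ) ∧ (x + t) % 2 = 0 then
    ((2 : ℝ) ^ t)⁻¹ * (Nat.choose t ((((t : ℤ) + x).toNat) / 2)) else 0

/-- `Δ(x,t) = p(x+1,t) - p(x-1,t)`. -/
def rwDelta (x : ℤ) (t : ℕ) : ℝ := rwP (x + 1) t - rwP (x - 1) t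

end KPZpaper

namespace Nat

theorem sum_range_choose_mul_choose_add (n j : ℕ) :
    ∑ k ∈ Finset.range (n + 1), n.choose k * n.choose (k + j) = (2 * n).choose (n + j) := by
  rw [two_mul, add_choose_eq, Finset.Nat.sum_antidiagonal_eq_sum_range_succ_mk,
    succ_eq_add_one, show n + j + 1 = j + (n + 1) by omega, Finset.sum_range_add _ j]
  have hlow : ∀ k ∈ Finset.range j, n.choose k * n.choose (n + j - k) = 0 := fun k hk => by
    rw [Finset.mem_range] at hk
    rw [choose_eq_zero_of_lt (by omega : n < n + j - k), mul_zero]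
  rw [Finset.sum_eq_zero hlow, zero_add]
  refine Finset.sum_congr rfl fun k hk => ?_
  rw [Finset.mem_range_succ_iff] at hk
  rw [show n + j - (j + k) = n - k by omega, choose_symm hk, add_comm j k, mul_comm]

theorem succ_mul_centralBinom_sq_le (n : ℕ) : (n + 1) * centralBinom n ^ 2 ≤ 16 ^ n := by
  induction n with
  | zero => simp
  | succ n ih =>
    have hrec := succ_mul_centralBinom_succ n
    have hpoly : (n + 2) * (2 * n + 1) ^ 2 ≤ 4 * (n + 1) ^ 3 := by ring_nf; omega
    refine le_of_mul_le_mul_left ?_ (pow_pos (succ_pos n) 2)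
    calc (n + 1) ^ 2 * ((n + 1 + 1) * centralBinom (n + 1) ^ 2)
        = (n + 2) * ((n + 1) * centralBinom (n + 1)) ^ 2 := by ring
      _ = 4 * ((n + 2) * (2 * n + 1) ^ 2) * centralBinom n ^ 2 := by rw [hrec]; ring
      _ ≤ 4 * (4 * (n + 1) ^ 3) * centralBinom n ^ 2 := by gcongr
      _ = 16 * (n + 1) ^ 2 * ((n + 1) * centralBinom n ^ 2) := by ring
      _ ≤ 16 * (n + 1) ^ 2 * 16 ^ n := by gcongr
      _ = (n + 1) ^ 2 * 16 ^ (n + 1) := by ring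

theorem centralBinom_sub_choose_succ (n : ℕ) :
    centralBinom n - (2 * n).choose (n + 1) = catalan n := by
  have h := choose_succ_right_eq (2 * n) n
  rw [show 2 * n - n = n by omega, ← centralBinom_eq_two_mul_choose] at h
  refine Nat.eq_of_mul_eq_mul_left (succ_pos n) ?_
  rw [succ_mul_catalan_eq_centralBinom, Nat.mul_sub, mul_comm _ ((2 * n).choose _), h,
    succ_mul, mul_comm n, Nat.add_sub_cancel_left]

theorem succ_pow_three_mul_catalan_sq_le (n : ℕ) : (n + 1) ^ 3 * catalan n ^ 2 ≤ 16 ^ n := by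
  calc (n + 1) ^ 3 * catalan n ^ 2 = (n + 1) * ((n + 1) * catalan n) ^ 2 := by ring
    _ ≤ 16 ^ n := by rw [succ_mul_catalan_eq_centralBinom]; exact succ_mul_centralBinom_sq_le n

theorem catalan_le_four_pow_mul_rpow (n : ℕ) :
    (catalan n : ℝ) ≤ 4 ^ n * (n + 1 : ℝ) ^ (-(3 / 2) : ℝ) := by
  have hm : (0 : ℝ) < n + 1 := by positivity
  have hsq : ((n + 1 : ℝ) ^ (3 / 2 : ℝ)) ^ 2 = (n + 1) ^ 3 := by
    rw [← Real.rpow_mul_natCast hm.le]; norm_num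
  have hnat : ((n + 1 : ℝ) ^ (3 / 2 : ℝ) * catalan n) ^ 2 ≤ (4 ^ n) ^ 2 := by
    rw [mul_pow, hsq, ← pow_mul, mul_comm n 2, pow_mul]
    exact_mod_cast succ_pow_three_mul_catalan_sq_le n
  rw [Real.rpow_neg hm.le, ← div_eq_mul_inv, le_div_iff₀ (by positivity), mul_comm]
  exact (pow_le_pow_iff_left₀ (by positivity) (by positivity) two_ne_zero).mp hnat

end Nat

namespace KPZpaper

theorem rwP_two_mul_sub (k t : ℕ) : rwP (2 * k - t) t = ((2 : ℝ) ^ t)⁻¹ * t.choose k := by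
  unfold rwP
  by_cases hk : k ≤ t
  · rw [if_pos ⟨abs_le.mpr ⟨by omega, by omega⟩, by omega⟩,
      show ((t : ℤ) + (2 * k - t)).toNat / 2 = k by omega]
  · rw [if_neg fun h => by rw [abs_le] at h; omega, Nat.choose_eq_zero_of_lt (by omega),
      Nat.cast_zero, mul_zero]

theorem rwP_eq_zero_of_notMem (t : ℕ) {x : ℤ}
    (hx : x ∉ (Finset.range (t + 1)).image fun k : ℕ => 2 * (k : ℤ) - t) : rwP x t = 0 := by
  refine if_neg fun ⟨hle, hpar⟩ => hx ?_
  obtain ⟨hlo, hhi⟩ := abs_le.mp hle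
  exact Finset.mem_image.mpr ⟨(x + t).toNat / 2, Finset.mem_range.mpr (by omega), by omega⟩

theorem hasSum_rwP_mul (t : ℕ) (f : ℤ → ℝ) :
    HasSum (fun x => rwP x t * f x)
      (∑ k ∈ Finset.range (t + 1), ((2 : ℝ) ^ t)⁻¹ * t.choose k * f (2 * k - t)) := by
  have hinj : Set.InjOn (fun k : ℕ => 2 * (k : ℤ) - t) (Finset.range (t + 1)) :=
    fun a _ b _ h => by simpa using h
  convert (hasSum_sum_of_ne_finset_zero fun x hx => by rw [rwP_eq_zero_of_notMem t hx, zero_mul] :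
    HasSum (fun x => rwP x t * f x) _) using 1
  rw [Finset.sum_image hinj]
  simp only [rwP_two_mul_sub]

theorem hasSum_rwP_mul_rwP_add (t j : ℕ) :
    HasSum (fun x => rwP x t * rwP (x + 2 * j) t) (((4 : ℝ) ^ t)⁻¹ * (2 * t).choose (t + j)) := by
  convert hasSum_rwP_mul t fun x => rwP (x + 2 * j) t using 1
  have hshift (k : ℕ) : (2 * k - t + 2 * j : ℤ) = 2 * (k + j : ℕ) - t := by push_cast; ring
  simp only [hshift, rwP_two_mul_sub]
  rw [← Nat.sum_range_choose_mul_choose_add, Nat.cast_sum, Finset.mul_sum]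
  refine Finset.sum_congr rfl fun k _ => ?_
  rw [show (4 : ℝ) = 2 ^ 2 by norm_num, ← pow_mul, pow_mul']
  push_cast; ring

theorem hasSum_rwDelta_sq (t : ℕ) :
    HasSum (fun z => rwDelta z t ^ 2) (2 * ((4 : ℝ) ^ t)⁻¹ * catalan t) := by
  have hsq : HasSum (fun x => rwP x t ^ 2) (((4 : ℝ) ^ t)⁻¹ * (2 * t).choose t) := by
    simpa [sq] using hasSum_rwP_mul_rwP_add t 0
  have hnext : HasSum (fun x => rwP x t * rwP (x + 2) t)
      (((4 : ℝ) ^ t)⁻¹ * (2 * t).choose (t + 1)) := by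
    simpa using hasSum_rwP_mul_rwP_add t 1
  have hval : 2 * ((4 : ℝ) ^ t)⁻¹ * catalan t = ((4 : ℝ) ^ t)⁻¹ * (2 * t).choose t +
      ((4 : ℝ) ^ t)⁻¹ * (2 * t).choose t - 2 * (((4 : ℝ) ^ t)⁻¹ * (2 * t).choose (t + 1)) := by
    rw [← Nat.centralBinom_sub_choose_succ, Nat.cast_sub (Nat.choose_le_centralBinom _ _),
      Nat.centralBinom_eq_two_mul_choose]
    ring
  rw [hval]
  refine ((((Equiv.addRight 1).hasSum_iff.mpr hsq).add
    ((Equiv.addRight (-1)).hasSum_iff.mpr hsq)).sub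
      (((Equiv.addRight (-1)).hasSum_iff.mpr hnext).mul_left 2)).congr_fun fun z => ?_
  simp only [Function.comp_apply, Equiv.coe_addRight, rwDelta, ← sub_eq_add_neg,
    show z - 1 + 2 = z + 1 by ring]
  ring

/-- There is a constant `C > 0` such that for every integer `t ≥ 1`,
`Σ_{z∈ℤ} Δ(z,t)² ≤ C t^{-3/2}`. -/
theorem rwDelta_sq_sum_bound :
    ∃ C : ℝ, 0 < C ∧ ∀ t : ℕ, 1 ≤ t →
      (∑' z : ℤ, rwDelta z t ^ 2) ≤ C * (t : ℝ) ^ (-(3 / 2) : ℝ) := by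
  refine ⟨2, two_pos, fun t ht => ?_⟩
  have ht₀ : (0 : ℝ) < t := by exact_mod_cast ht
  rw [(hasSum_rwDelta_sq t).tsum_eq]
  calc 2 * ((4 : ℝ) ^ t)⁻¹ * catalan t
      ≤ 2 * ((4 : ℝ) ^ t)⁻¹ * (4 ^ t * (t + 1 : ℝ) ^ (-(3 / 2) : ℝ)) := by
        gcongr; exact Nat.catalan_le_four_pow_mul_rpow t
    _ = 2 * (t + 1 : ℝ) ^ (-(3 / 2) : ℝ) := by field_simp
    _ ≤ 2 * (t : ℝ) ^ (-(3 / 2) : ℝ) :=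
        mul_le_mul_of_nonneg_left (Real.rpow_le_rpow_of_nonpos ht₀ (by linarith) (by norm_num))
          two_pos.le

end KPZpaper
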